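/- arXiv:2308.08106 — 8 statements merged into one kernel-verified Lean document; each statement's English description precedes it below -/
import Mathlib

section
/- If (S, I, R) is a C¹ solution of the SIR system on [0,∞) with S(0) = n, I(0) = a, R(0) = 0, and the total population is conserved, i.e. S(t) + I(t) + R(t) = N for all t ≥ 0 with N = n + a, then the removal function R satisfies the nonlinear differential equation R'(t) = γ(N − n·e^{−μR(t)} − R(t)) for all t ≥ 0, where μ = β/γ. -/
open Real Set

/-! Along a solution, `S · exp (μ R)` has derivative `S' e^{μR} + μ S R' e^{μR} = 0` because
`S' = -β S I = -μ S R'`; so `S = n e^{-μR}`, and conservation gives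
`R' = γ I = γ (N - S - R) = γ (N - n e^{-μR} - R)`. -/

theorem eq_of_hasDerivAt_zero_of_le {E : Type*} [NormedAddCommGroup E] [NormedSpace ℝ E]
    {f : ℝ → E} {a : ℝ} (hf : ∀ x, a ≤ x → HasDerivAt f 0 x) :
    ∀ x, a ≤ x → f x = f a := fun x hx =>
  constant_of_has_deriv_right_zero
    (fun y hy => (hf y hy.1).continuousAt.continuousWithinAt)
    (fun y hy => (hf y hy.1).hasDerivWithinAt) x (right_mem_Icc.2 hx)

theorem hasDerivAt_mul_exp_mul_eq_zero {S R : ℝ → ℝ} {μ r t : ℝ}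
    (hS : HasDerivAt S (-(μ * r * S t)) t) (hR : HasDerivAt R r t) :
    HasDerivAt (fun y => S y * exp (μ * R y)) 0 t := by
  refine (hS.mul (hR.const_mul μ).exp).congr_deriv ?_
  ring

theorem susceptible_eq_mul_exp_neg_removed {β γ μ n : ℝ} {S I R : ℝ → ℝ}
    (hμγ : μ * γ = β)
    (hS : ∀ t, 0 ≤ t → HasDerivAt S (-(β * S t * I t)) t)
    (hR : ∀ t, 0 ≤ t → HasDerivAt R (γ * I t) t)
    (hS0 : S 0 = n) (hR0 : R 0 = 0) :
    ∀ t, 0 ≤ t → S t = n * exp (-(μ * R t)) := by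
  have hderiv : ∀ t, 0 ≤ t → HasDerivAt (fun y => S y * exp (μ * R y)) 0 t := fun t ht =>
    hasDerivAt_mul_exp_mul_eq_zero
      ((hS t ht).congr_deriv (by rw [← hμγ]; ring)) (hR t ht)
  intro t ht
  have hconst : S t * exp (μ * R t) = n := by
    simpa [hS0, hR0] using eq_of_hasDerivAt_zero_of_le hderiv t ht
  rw [← hconst, mul_assoc, ← exp_add, add_neg_cancel, exp_zero, mul_one]

theorem sir_removal_ode_general
    (β γ n N μ : ℝ) (hγ : 0 < γ)
    (hμ : μ = β / γ)
    (S I R : ℝ → ℝ)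
    (hS : ∀ t, 0 ≤ t → HasDerivAt S (-(β * S t * I t)) t)
    (hR : ∀ t, 0 ≤ t → HasDerivAt R (γ * I t) t)
    (hS0 : S 0 = n) (hR0 : R 0 = 0)
    (hcons : ∀ t, 0 ≤ t → S t + I t + R t = N) :
    ∀ t, 0 ≤ t → HasDerivAt R (γ * (N - n * Real.exp (-(μ * R t)) - R t)) t := by
  have hμγ : μ * γ = β := by rw [hμ, div_mul_cancel₀ β hγ.ne']
  intro t ht
  have hSt := susceptible_eq_mul_exp_neg_removed hμγ hS hR hS0 hR0 t ht
  have hIt : I t = N - n * exp (-(μ * R t)) - R t := by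
    linarith [hcons t ht]
  simpa only [hIt] using hR t ht

/-- If `(S, I, R)` is a `C¹` solution of the SIR system with conserved total population
`S + I + R = N = n + a`, then `R` satisfies `R'(t) = γ(N − n·e^{−μR(t)} − R(t))`. -/
theorem sir_removal_ode
    (β γ n a N μ : ℝ) (hβ : 0 < β) (hγ : 0 < γ) (hn : 1 < n) (ha : 1 ≤ a)
    (hN : N = n + a) (hμ : μ = β / γ)
    (S I R : ℝ → ℝ)
    (hI : ∀ t, 0 ≤ t → HasDerivAt I (β * S t * I t - γ * I t) t)
    (hS : ∀ t, 0 ≤ t → HasDerivAt S (-(β * S t * I t)) t)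
    (hR : ∀ t, 0 ≤ t → HasDerivAt R (γ * I t) t)
    (hS0 : S 0 = n) (hI0 : I 0 = a) (hR0 : R 0 = 0)
    (hcons : ∀ t, 0 ≤ t → S t + I t + R t = N) :
    ∀ t, 0 ≤ t → HasDerivAt R (γ * (N - n * Real.exp (-(μ * R t)) - R t)) t :=
  sir_removal_ode_general β γ n N μ hγ hμ S I R hS hR hS0 hR0 hcons
end

section
/- If (S, I, R) is a C¹ solution of the SIR system on [0,∞) with S(0) = n, I(0) = a, R(0) = 0 (so that S(t) > 0 for all t ≥ 0), then the number of infectives is bounded by the amplitude: I(t) ≤ −(1/μ)·ln(μ) − 1/μ + a + n − (1/μ)·ln(n) for all t ≥ 0, where μ = β/γ. -/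
/-! Along a solution, `I + S - (γ/β) log S` is a first integral of the SIR system, so
`I(t) = a + n - (1/μ) log n - ((1/μ) log S(t) - S(t))`, and the bracket is at most
its value at the maximiser `S = 1/μ` of `s ↦ (1/μ) log s - s`. -/

open Real

theorem one_div_mul_log_sub_le {μ s : ℝ} (hμ : 0 < μ) (hs : 0 < s) :
    1 / μ * log s - s ≤ -(1 / μ) * log μ - 1 / μ := by
  have hlog : log μ + log s ≤ μ * s - 1 := by
    rw [← log_mul hμ.ne' hs.ne']
    exact log_le_sub_one_of_pos (mul_pos hμ hs)
  have hscaled := mul_le_mul_of_nonneg_left hlog (one_div_pos.mpr hμ).le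
  have hcancel : 1 / μ * (μ * s) = s := by field_simp
  linarith [mul_add (1 / μ) (log μ) (log s), mul_sub (1 / μ) (μ * s) 1]

theorem sir_first_integral {β γ : ℝ} (hβ : β ≠ 0) {S I : ℝ → ℝ}
    (hI : ∀ t, 0 ≤ t → HasDerivAt I (β * S t * I t - γ * I t) t)
    (hS : ∀ t, 0 ≤ t → HasDerivAt S (-(β * S t * I t)) t)
    (hS_ne : ∀ t, 0 ≤ t → S t ≠ 0) {t : ℝ} (ht : 0 ≤ t) :
    I t + S t - γ / β * log (S t) = I 0 + S 0 - γ / β * log (S 0) := by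
  set V : ℝ → ℝ := fun x => I x + S x - γ / β * log (S x)
  have hV_deriv : ∀ x, 0 ≤ x → HasDerivAt V 0 x := by
    intro x hx
    have hlogS := (hS x hx).log (hS_ne x hx)
    refine (((hI x hx).add (hS x hx)).sub (hlogS.const_mul (γ / β))).congr_deriv ?_
    field_simp [hS_ne x hx]
    ring
  exact constant_of_has_deriv_right_zero
    (fun x hx => (hV_deriv x hx.1).continuousAt.continuousWithinAt)
    (fun x hx => (hV_deriv x hx.1).hasDerivWithinAt) t ⟨ht, le_rfl⟩

theorem sir_amplitude_bound_general
    (β γ n a μ : ℝ) (hβ : 0 < β) (hγ : 0 < γ)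
    (hμ : μ = β / γ)
    (S I : ℝ → ℝ)
    (hI : ∀ t, 0 ≤ t → HasDerivAt I (β * S t * I t - γ * I t) t)
    (hS : ∀ t, 0 ≤ t → HasDerivAt S (-(β * S t * I t)) t)
    (hS0 : S 0 = n) (hI0 : I 0 = a)
    (hSpos : ∀ t, 0 ≤ t → 0 < S t) :
    ∀ t, 0 ≤ t →
      I t ≤ -(1 / μ) * Real.log μ - 1 / μ + a + n - (1 / μ) * Real.log n := by
  intro t ht
  have hμ_pos : 0 < μ := hμ ▸ div_pos hβ hγ
  have hμ_inv : 1 / μ = γ / β := by rw [hμ, one_div_div]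
  have hconst := sir_first_integral hβ.ne' hI hS (fun x hx => (hSpos x hx).ne') ht
  have hmax := one_div_mul_log_sub_le hμ_pos (hSpos t ht)
  rw [hS0, hI0, ← hμ_inv] at hconst
  linarith

/-- Amplitude bound for the SIR model: any `C¹` solution (with `S > 0` on `[0,∞)`)
satisfies `I(t) ≤ −(1/μ)·ln(μ) − 1/μ + a + n − (1/μ)·ln(n)` where `μ = β/γ`. -/
theorem sir_amplitude_bound
    (β γ n a μ : ℝ) (hβ : 0 < β) (hγ : 0 < γ) (hn : 1 < n) (ha : 1 ≤ a)
    (hμ : μ = β / γ)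
    (S I R : ℝ → ℝ)
    (hI : ∀ t, 0 ≤ t → HasDerivAt I (β * S t * I t - γ * I t) t)
    (hS : ∀ t, 0 ≤ t → HasDerivAt S (-(β * S t * I t)) t)
    (hR : ∀ t, 0 ≤ t → HasDerivAt R (γ * I t) t)
    (hS0 : S 0 = n) (hI0 : I 0 = a) (hR0 : R 0 = 0)
    (hSpos : ∀ t, 0 ≤ t → 0 < S t) :
    ∀ t, 0 ≤ t →
      I t ≤ -(1 / μ) * Real.log μ - 1 / μ + a + n - (1 / μ) * Real.log n :=
  sir_amplitude_bound_general β γ n a μ hβ hγ hμ S I hI hS hS0 hI0 hSpos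
end

section
/- For every relaxation parameter M ≥ γ, the relaxation scheme is non-negativity-preserving: for every k ≥ 0 and every t ≥ 0 one has R_k(t) ≥ 0; moreover 0 ≤ g(R_k(t)) ≤ γn + M·R_k(t) for every k ≥ 0 and t ≥ 0. -/
/-!
Induction on `k`. Since `0 ≤ g r ≤ γn + γr ≤ γn + Mr` for `r ≥ 0`, the forcing term
`γN - g(R_k) + M R_k` of the equation for `R_{k+1}` is at least `γa ≥ 0` as soon as `R_k ≥ 0`.
Hence `e^{Mt} R_{k+1}(t)`, whose derivative is `e^{Mt}` times that forcing term, is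
nondecreasing from its value `0` at `t = 0`.
-/

open Real Set

theorem nonneg_of_hasDerivAt_of_add_mul_nonneg {f f' : ℝ → ℝ} {M : ℝ}
    (hf : ∀ t, 0 ≤ t → HasDerivAt f (f' t) t) (hf' : ∀ t, 0 ≤ t → 0 ≤ f' t + M * f t)
    (h0 : 0 ≤ f 0) {t : ℝ} (ht : 0 ≤ t) : 0 ≤ f t := by
  have hF : ∀ s, 0 ≤ s →
      HasDerivAt (fun s => exp (M * s) * f s) (exp (M * s) * (f' s + M * f s)) s := by
    intro s hs
    have hexp : HasDerivAt (fun s => exp (M * s)) (exp (M * s) * M) s := by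
      simpa using ((hasDerivAt_id s).const_mul M).exp
    have hprod : HasDerivAt (fun s => exp (M * s) * f s)
        (exp (M * s) * M * f s + exp (M * s) * f' s) s := hexp.mul (hf s hs)
    convert hprod using 1
    ring
  have hmono : MonotoneOn (fun s => exp (M * s) * f s) (Ici 0) := by
    refine monotoneOn_of_hasDerivWithinAt_nonneg (convex_Ici 0)
      (fun s hs => (hF s hs).continuousAt.continuousWithinAt)
      (fun s hs => (hF s (interior_subset hs)).hasDerivWithinAt)
      (fun s hs => mul_nonneg (exp_pos _).le (hf' s (interior_subset hs)))
  have hle : exp (M * 0) * f 0 ≤ exp (M * t) * f t := hmono self_mem_Ici ht ht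
  rw [mul_zero, exp_zero, one_mul] at hle
  exact nonneg_of_mul_nonneg_right (h0.trans hle) (exp_pos _)

theorem exp_decay_add_mul_mem_Icc {c μ γ x : ℝ} (hc : 0 ≤ c) (hμ : 0 ≤ μ) (hγ : 0 ≤ γ)
    (hx : 0 ≤ x) : c * exp (-(μ * x)) + γ * x ∈ Icc 0 (c + γ * x) := by
  refine ⟨by positivity, ?_⟩
  have : exp (-(μ * x)) ≤ 1 := exp_le_one_iff.2 (by simpa using mul_nonneg hμ hx)
  nlinarith

/-- For `M ≥ γ` the relaxation scheme preserves non-negativity: `R_k(t) ≥ 0` for all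
`k ≥ 0`, `t ≥ 0`, and moreover `0 ≤ g(R_k(t)) ≤ γn + M·R_k(t)`, where
`g(r) = γ·n·e^{−μr} + γ·r`. -/
theorem relaxation_scheme_nonneg
    (β γ n a N μ M : ℝ) (hβ : 0 < β) (hγ : 0 < γ) (hn : 1 < n) (ha : 1 ≤ a)
    (hN : N = n + a) (hμ : μ = β / γ) (hM : γ ≤ M)
    (g : ℝ → ℝ) (hg : ∀ r, g r = γ * n * Real.exp (-(μ * r)) + γ * r)
    (R : ℕ → ℝ → ℝ)
    (hR0 : ∀ t, R 0 t = 0)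
    (hinit : ∀ k, R k 0 = 0)
    (hode : ∀ k t, 0 ≤ t →
      HasDerivAt (R (k + 1)) (γ * N - g (R k t) + M * R k t - M * R (k + 1) t) t) :
    ∀ k t, 0 ≤ t →
      0 ≤ R k t ∧ 0 ≤ g (R k t) ∧ g (R k t) ≤ γ * n + M * R k t := by
  have hg_bounds : ∀ r, 0 ≤ r → 0 ≤ g r ∧ g r ≤ γ * n + M * r := by
    intro r hr
    obtain ⟨hlow, hup⟩ := exp_decay_add_mul_mem_Icc (c := γ * n) (μ := μ)
      (mul_nonneg hγ.le (by linarith)) (by rw [hμ]; positivity) hγ.le hr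
    rw [hg]
    exact ⟨hlow, hup.trans (by nlinarith)⟩
  have hR_nonneg : ∀ k t, 0 ≤ t → 0 ≤ R k t := by
    intro k
    induction k with
    | zero => simp [hR0]
    | succ k ih =>
      refine fun t ht => nonneg_of_hasDerivAt_of_add_mul_nonneg (M := M) (hode k)
        (fun s hs => ?_) (hinit _).ge ht
      have := (hg_bounds _ (ih s hs)).2
      rw [hN]
      nlinarith
  exact fun k t ht => ⟨hR_nonneg k t ht, hg_bounds _ (hR_nonneg k t ht)⟩
end

section
/- Let M ≥ γ, let R : [0,T] → ℝ be the nonnegative C¹ solution of R'(t) = γ(N − n·e^{−μR(t)} − R(t)), R(0) = 0, and let (R_k) be the relaxation scheme. Then for every k ≥ 1 and every t ∈ [0,T], the error E_k(t) = R_k(t) − R(t) satisfies |E_k(t)|² ≤ (M + γnμ − γ)²·t·∫₀ᵗ |E_{k−1}(s)|² ds. -/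
/-!
Subtracting the equations for `R` and `R_k` gives `E_k' + M E_k = φ`, where
`φ = h(R_{k-1}) - h(R)` for `h r = M r - g r`. On `r ≥ 0` the slope of `h` is
`M - γ + γnμ e^{-μr} ∈ [0, M + γnμ - γ]`, so `|φ| ≤ (M + γnμ - γ) |E_{k-1}|`.
The integrating factor `e^{Mt}` and `M ≥ 0` give `|E_k(t)| ≤ ∫₀ᵗ |φ|`,
and Cauchy–Schwarz on `[0, t]` squares this.
-/

open Set Real intervalIntegral MeasureTheory

theorem sq_intervalIntegral_le_mul_intervalIntegral_sq {f : ℝ → ℝ} {a b : ℝ} (hab : a ≤ b)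
    (hf : ContinuousOn f (Icc a b)) :
    (∫ s in a..b, f s) ^ 2 ≤ (b - a) * ∫ s in a..b, f s ^ 2 := by
  have hfi : IntervalIntegrable f volume a b := hf.intervalIntegrable_of_Icc hab
  have hf2i : IntervalIntegrable (fun s => f s ^ 2) volume a b :=
    (hf.pow 2).intervalIntegrable_of_Icc hab
  set I := ∫ s in a..b, f s
  set J := ∫ s in a..b, f s ^ 2
  -- the variance of `(b - a) f` about its mean is nonnegative
  have hvar : 0 ≤ ∫ s in a..b, ((b - a) * f s - I) ^ 2 :=
    integral_nonneg hab fun s _ => sq_nonneg _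
  have hexpand : ∫ s in a..b, ((b - a) * f s - I) ^ 2 = (b - a) * ((b - a) * J - I ^ 2) := by
    have hpoint : ∀ s, ((b - a) * f s - I) ^ 2 =
        (b - a) ^ 2 * f s ^ 2 - 2 * (b - a) * I * f s + I ^ 2 := fun s => by ring
    simp_rw [hpoint]
    rw [integral_add ((hf2i.const_mul _).sub (hfi.const_mul _)) intervalIntegrable_const,
      integral_sub (hf2i.const_mul _) (hfi.const_mul _), intervalIntegral.integral_const_mul,
      intervalIntegral.integral_const_mul,
      intervalIntegral.integral_const, smul_eq_mul]
    ring
  rcases hab.eq_or_lt with rfl | hlt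
  · simp [I]
  · nlinarith

theorem abs_le_integral_abs_of_hasDerivAt_add_mul {E φ : ℝ → ℝ} {M t : ℝ} (hM : 0 ≤ M)
    (ht : 0 ≤ t) (hE : ∀ s ∈ Icc 0 t, HasDerivAt E (φ s - M * E s) s) (hE0 : E 0 = 0)
    (hφ : ContinuousOn φ (Icc 0 t)) :
    |E t| ≤ ∫ s in 0..t, |φ s| := by
  have hexpc : Continuous fun s => exp (M * s) := by fun_prop
  have hF : ∀ s ∈ uIcc 0 t,
      HasDerivAt (fun s => exp (M * s) * E s) (exp (M * s) * φ s) s := by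
    intro s hs
    rw [uIcc_of_le ht] at hs
    have hexp : HasDerivAt (fun s => exp (M * s)) (exp (M * s) * M) s := by
      simpa using ((hasDerivAt_id s).const_mul M).exp
    exact (hexp.mul (hE s hs)).congr_deriv (by ring)
  have hFTC : ∫ s in 0..t, exp (M * s) * φ s = exp (M * t) * E t := by
    rw [integral_eq_sub_of_hasDerivAt hF
      ((hexpc.continuousOn.mul hφ).intervalIntegrable_of_Icc ht)]
    simp [hE0]
  have hweighted : exp (M * t) * |E t| ≤ exp (M * t) * ∫ s in 0..t, |φ s| :=
    calc exp (M * t) * |E t| = |∫ s in 0..t, exp (M * s) * φ s| := by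
          rw [hFTC, abs_mul, abs_of_pos (exp_pos _)]
      _ ≤ ∫ s in 0..t, |exp (M * s) * φ s| := abs_integral_le_integral_abs ht
      _ ≤ ∫ s in 0..t, exp (M * t) * |φ s| := by
          refine integral_mono_on ht
            ((hexpc.continuousOn.mul hφ).abs.intervalIntegrable_of_Icc ht)
            ((hφ.abs.intervalIntegrable_of_Icc ht).const_mul _) fun s hs => ?_
          rw [abs_mul, abs_of_pos (exp_pos _)]
          gcongr
          exact hs.2
      _ = exp (M * t) * ∫ s in 0..t, |φ s| := intervalIntegral.integral_const_mul _ _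
  exact le_of_mul_le_mul_left hweighted (exp_pos _)

theorem sq_abs_le_of_hasDerivAt_add_mul {E φ D : ℝ → ℝ} {M L t : ℝ} (hM : 0 ≤ M)
    (ht : 0 ≤ t) (hE : ∀ s ∈ Icc 0 t, HasDerivAt E (φ s - M * E s) s) (hE0 : E 0 = 0)
    (hφ : ContinuousOn φ (Icc 0 t)) (hD : ContinuousOn D (Icc 0 t))
    (hφD : ∀ s ∈ Icc 0 t, |φ s| ≤ L * |D s|) :
    |E t| ^ 2 ≤ L ^ 2 * t * ∫ s in 0..t, |D s| ^ 2 := by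
  have hint : ∫ s in 0..t, |φ s| ≤ L * ∫ s in 0..t, |D s| := by
    rw [← intervalIntegral.integral_const_mul]
    exact integral_mono_on ht (hφ.abs.intervalIntegrable_of_Icc ht)
      ((hD.abs.intervalIntegrable_of_Icc ht).const_mul _) hφD
  have hCS := sq_intervalIntegral_le_mul_intervalIntegral_sq (f := fun s => |D s|) ht hD.abs
  rw [sub_zero] at hCS
  calc |E t| ^ 2 ≤ (L * ∫ s in 0..t, |D s|) ^ 2 :=
        pow_le_pow_left₀ (abs_nonneg _)
          ((abs_le_integral_abs_of_hasDerivAt_add_mul hM ht hE hE0 hφ).trans hint) 2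
    _ = L ^ 2 * (∫ s in 0..t, |D s|) ^ 2 := mul_pow _ _ 2
    _ ≤ L ^ 2 * t * ∫ s in 0..t, |D s| ^ 2 := by
        rw [mul_assoc _ t]
        exact mul_le_mul_of_nonneg_left hCS (sq_nonneg _)

theorem abs_mul_sub_sub_le_of_nonneg {g : ℝ → ℝ} {γ n μ M x y : ℝ} (hγ : 0 ≤ γ)
    (hn : 0 ≤ n) (hμ : 0 ≤ μ) (hM : γ ≤ M) (hg : ∀ r, g r = γ * n * exp (-(μ * r)) + γ * r)
    (hx : 0 ≤ x) (hy : 0 ≤ y) :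
    |M * (x - y) - (g x - g y)| ≤ (M + γ * n * μ - γ) * |x - y| := by
  have hderiv : ∀ r ∈ Ici (0 : ℝ), HasDerivWithinAt (fun r => M * r - g r)
      (M - γ + γ * n * μ * exp (-(μ * r))) (Ici 0) r := by
    intro r _
    rw [show g = fun r => γ * n * exp (-(μ * r)) + γ * r from funext hg]
    refine HasDerivAt.hasDerivWithinAt ?_
    have hlin : ∀ c : ℝ, HasDerivAt (fun r => c * r) c r := fun c => by
      simpa using (hasDerivAt_id r).const_mul c
    exact (((hlin M).sub (((hlin μ).neg.exp.const_mul (γ * n)).add (hlin γ))).congr_deriv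
      (by simp only [Pi.neg_apply]; ring))
  have hbound :
      ∀ r ∈ Ici (0 : ℝ), ‖M - γ + γ * n * μ * exp (-(μ * r))‖ ≤ M + γ * n * μ - γ := by
    intro r hr
    have hexp : exp (-(μ * r)) ≤ 1 := exp_le_one_iff.2 (neg_nonpos.2 (mul_nonneg hμ hr))
    have hγnμ : 0 ≤ γ * n * μ := by positivity
    rw [Real.norm_eq_abs, abs_of_nonneg (by positivity)]
    nlinarith [exp_pos (-(μ * r))]
  have hmvt :=
    Convex.norm_image_sub_le_of_norm_hasDerivWithin_le hderiv hbound (convex_Ici 0) hy hx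
  rw [Real.norm_eq_abs, Real.norm_eq_abs] at hmvt
  convert hmvt using 2
  ring

theorem relaxation_error_recursion_general
    (β γ n N μ M T : ℝ) (hβ : 0 < β) (hγ : 0 < γ) (hn : 1 < n)
    (hμ : μ = β / γ) (hM : γ ≤ M)
    (g : ℝ → ℝ) (hg : ∀ r, g r = γ * n * Real.exp (-(μ * r)) + γ * r)
    (R : ℝ → ℝ)
    (hRode : ∀ t ∈ Set.Icc (0 : ℝ) T,
      HasDerivAt R (γ * (N - n * Real.exp (-(μ * R t)) - R t)) t)
    (hRinit : R 0 = 0)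
    (hRpos : ∀ t ∈ Set.Icc (0 : ℝ) T, 0 ≤ R t)
    (Rs : ℕ → ℝ → ℝ)
    (hRs0 : ∀ t, Rs 0 t = 0)
    (hinit : ∀ k, Rs k 0 = 0)
    (hode : ∀ k, ∀ t ∈ Set.Icc (0 : ℝ) T,
      HasDerivAt (Rs (k + 1)) (γ * N - g (Rs k t) + M * Rs k t - M * Rs (k + 1) t) t)
    (hpos : ∀ k, ∀ t ∈ Set.Icc (0 : ℝ) T, 0 ≤ Rs k t) :
    ∀ k : ℕ, 1 ≤ k → ∀ t ∈ Set.Icc (0 : ℝ) T,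
      |Rs k t - R t| ^ 2 ≤
        (M + γ * n * μ - γ) ^ 2 * t * ∫ s in (0 : ℝ)..t, |Rs (k - 1) s - R s| ^ 2 := by
  intro k hk t ht
  obtain ⟨m, rfl⟩ := Nat.exists_eq_add_of_le' hk
  rw [Nat.add_sub_cancel]
  have hsub : Icc 0 t ⊆ Icc 0 T := Icc_subset_Icc_right ht.2
  have hμ0 : 0 ≤ μ := hμ ▸ (div_pos hβ hγ).le
  have hRc : ContinuousOn R (Icc 0 t) := fun s hs =>
    (hRode s (hsub hs)).continuousAt.continuousWithinAt
  have hRmc : ContinuousOn (Rs m) (Icc 0 t) := by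
    cases m with
    | zero => simpa only [show Rs 0 = fun _ => 0 from funext hRs0] using continuousOn_const
    | succ j => exact fun s hs => (hode j s (hsub hs)).continuousAt.continuousWithinAt
  have hgc : Continuous g := by rw [show g = _ from funext hg]; fun_prop
  have hforcing :
      ContinuousOn (fun s => M * (Rs m s - R s) - (g (Rs m s) - g (R s))) (Icc 0 t) :=
    (continuousOn_const.mul (hRmc.sub hRc)).sub
      ((hgc.comp_continuousOn hRmc).sub (hgc.comp_continuousOn hRc))
  exact sq_abs_le_of_hasDerivAt_add_mul (hγ.le.trans hM) ht.1
    (fun s hs => ((hode m s (hsub hs)).sub (hRode s (hsub hs))).congr_deriv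
      (by simp only [Pi.sub_apply, hg]; ring))
    (by simp [hinit, hRinit]) hforcing (hRmc.sub hRc) fun s hs =>
      abs_mul_sub_sub_le_of_nonneg hγ.le (by linarith) hμ0 hM hg (hpos m s (hsub hs))
        (hRpos s (hsub hs))

/-- Error recursion for the relaxation scheme: for `k ≥ 1` and `t ∈ [0,T]`, the error
`E_k = R_k − R` satisfies `|E_k(t)|² ≤ (M + γnμ − γ)²·t·∫₀ᵗ |E_{k−1}(s)|² ds`. -/
theorem relaxation_error_recursion
    (β γ n a N μ M T : ℝ) (hβ : 0 < β) (hγ : 0 < γ) (hn : 1 < n) (ha : 1 ≤ a)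
    (hN : N = n + a) (hμ : μ = β / γ) (hM : γ ≤ M) (hT : 0 < T)
    (g : ℝ → ℝ) (hg : ∀ r, g r = γ * n * Real.exp (-(μ * r)) + γ * r)
    (R : ℝ → ℝ)
    (hRode : ∀ t ∈ Set.Icc (0 : ℝ) T,
      HasDerivAt R (γ * (N - n * Real.exp (-(μ * R t)) - R t)) t)
    (hRinit : R 0 = 0)
    (hRpos : ∀ t ∈ Set.Icc (0 : ℝ) T, 0 ≤ R t)
    (Rs : ℕ → ℝ → ℝ)
    (hRs0 : ∀ t, Rs 0 t = 0)
    (hinit : ∀ k, Rs k 0 = 0)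
    (hode : ∀ k, ∀ t ∈ Set.Icc (0 : ℝ) T,
      HasDerivAt (Rs (k + 1)) (γ * N - g (Rs k t) + M * Rs k t - M * Rs (k + 1) t) t)
    (hpos : ∀ k, ∀ t ∈ Set.Icc (0 : ℝ) T, 0 ≤ Rs k t) :
    ∀ k : ℕ, 1 ≤ k → ∀ t ∈ Set.Icc (0 : ℝ) T,
      |Rs k t - R t| ^ 2 ≤
        (M + γ * n * μ - γ) ^ 2 * t * ∫ s in (0 : ℝ)..t, |Rs (k - 1) s - R s| ^ 2 :=
  relaxation_error_recursion_general β γ n N μ M T hβ hγ hn hμ hM g hg R hRode hRinit hRpos Rs hRs0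
    hinit hode hpos
end

section
/- Assume nμ < 1 and M ≥ γ. Let R : [0,T] → ℝ be the nonnegative C¹ solution of R'(t) = γ(N − n·e^{−μR(t)} − R(t)), R(0) = 0, and let (R_k) be the relaxation scheme. Then for every k ≥ 1, max_{0 ≤ t ≤ T} |R_k(t) − R(t)| ≤ √((M + γnμ − γ)/(M − γnμ + γ)) · max_{0 ≤ t ≤ T} |R_{k−1}(t) − R(t)|. -/
/-!
The error `e_k = R_k − R` satisfies `e_k' + M e_k = F(R_{k−1}) − F(R)` with `e_k(0) = 0`, where
`F(r) = M r − g(r)`. On `[0, ∞)` the exponential term is `μ`-Lipschitz, so `F` is Lipschitz with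
constant `L = M + γnμ − γ ≥ 0` and the right-hand side is bounded by `L · max |e_{k−1}|`. The
integrating factor `e^{Mt}` then gives `|e_k| ≤ (L / M) · max |e_{k−1}|`, and
`L / M ≤ √(L / (M − γnμ + γ))` because `(M + d)(M − d) ≤ M²` for `d = γnμ − γ`.
-/

open Real Set

lemma abs_exp_sub_exp_le_of_nonpos {x y : ℝ} (hx : x ≤ 0) (hy : y ≤ 0) :
    |exp x - exp y| ≤ |x - y| := by
  wlog hxy : y ≤ x generalizing x y
  · rw [abs_sub_comm, abs_sub_comm x]
    exact this hy hx (le_of_not_ge hxy)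
  rw [abs_of_nonneg (sub_nonneg.2 (exp_le_exp.2 hxy)), abs_of_nonneg (sub_nonneg.2 hxy)]
  calc exp x - exp y = exp x * (1 - exp (y - x)) := by rw [mul_sub, ← exp_add]; ring_nf
    _ ≤ 1 * (x - y) :=
        mul_le_mul (exp_le_one_iff.2 hx) (by linarith [add_one_le_exp (y - x)])
          (sub_nonneg.2 (exp_le_one_iff.2 (by linarith))) zero_le_one
    _ = x - y := one_mul _

lemma abs_exp_neg_mul_sub_le {μ x y : ℝ} (hμ : 0 ≤ μ) (hx : 0 ≤ x) (hy : 0 ≤ y) :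
    |exp (-(μ * x)) - exp (-(μ * y))| ≤ μ * |x - y| := by
  calc |exp (-(μ * x)) - exp (-(μ * y))| ≤ |-(μ * x) - -(μ * y)| :=
        abs_exp_sub_exp_le_of_nonpos (by nlinarith) (by nlinarith)
    _ = μ * |x - y| := by
        rw [show -(μ * x) - -(μ * y) = μ * (y - x) by ring, abs_mul, abs_of_nonneg hμ,
          abs_sub_comm]

lemma abs_mul_sub_sub_exp_le {γ n μ M x y : ℝ} (hγ : 0 ≤ γ) (hn : 0 ≤ n) (hμ : 0 ≤ μ)
    (hM : γ ≤ M) (hx : 0 ≤ x) (hy : 0 ≤ y) :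
    |M * (x - y) - ((γ * n * exp (-(μ * x)) + γ * x) - (γ * n * exp (-(μ * y)) + γ * y))| ≤
      (M + γ * n * μ - γ) * |x - y| := by
  calc |M * (x - y) - ((γ * n * exp (-(μ * x)) + γ * x) - (γ * n * exp (-(μ * y)) + γ * y))|
        = |(M - γ) * (x - y) - γ * n * (exp (-(μ * x)) - exp (-(μ * y)))| := by
          congr 1; ring
    _ ≤ |(M - γ) * (x - y)| + |γ * n * (exp (-(μ * x)) - exp (-(μ * y)))| := abs_sub _ _
    _ = (M - γ) * |x - y| + γ * n * |exp (-(μ * x)) - exp (-(μ * y))| := by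
        rw [abs_mul, abs_mul, abs_of_nonneg (sub_nonneg.2 hM), abs_of_nonneg (mul_nonneg hγ hn)]
    _ ≤ (M - γ) * |x - y| + γ * n * (μ * |x - y|) := by
        gcongr
        exact abs_exp_neg_mul_sub_le hμ hx hy
    _ = (M + γ * n * μ - γ) * |x - y| := by ring

lemma le_of_hasDerivAt_eq_sub_mul {e h : ℝ → ℝ} {M c a b : ℝ}
    (he : ∀ x ∈ Icc a b, HasDerivAt e (h x - M * e x) x) (hh : ∀ x ∈ Icc a b, h x ≤ M * c)
    (ha : e a ≤ c) : ∀ x ∈ Icc a b, e x ≤ c := by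
  set φ : ℝ → ℝ := fun x => exp (M * x) * (e x - c)
  have hφ : ∀ x ∈ Icc a b, HasDerivAt φ (exp (M * x) * (h x - M * c)) x := by
    intro x hx
    exact (((hasDerivAt_id x).const_mul M).exp.mul ((he x hx).sub_const c)).congr_deriv
      (by simp only [id]; ring)
  have hanti : AntitoneOn φ (Icc a b) :=
    antitoneOn_of_hasDerivWithinAt_nonpos (convex_Icc a b)
      (fun x hx => (hφ x hx).continuousAt.continuousWithinAt)
      (fun x hx => (hφ x (interior_subset hx)).hasDerivWithinAt)
      (fun x hx => mul_nonpos_of_nonneg_of_nonpos (exp_pos _).le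
        (sub_nonpos.2 (hh x (interior_subset hx))))
  intro x hx
  have hφx : φ x ≤ 0 :=
    (hanti (left_mem_Icc.2 (hx.1.trans hx.2)) hx hx.1).trans
      (mul_nonpos_of_nonneg_of_nonpos (exp_pos _).le (sub_nonpos.2 ha))
  exact sub_nonpos.1 (nonpos_of_mul_nonpos_right hφx (exp_pos _))

lemma abs_le_of_hasDerivAt_eq_sub_mul {e h : ℝ → ℝ} {M c a b : ℝ}
    (he : ∀ x ∈ Icc a b, HasDerivAt e (h x - M * e x) x) (hh : ∀ x ∈ Icc a b, |h x| ≤ M * c)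
    (ha : |e a| ≤ c) : ∀ x ∈ Icc a b, |e x| ≤ c := by
  intro x hx
  have hupper := le_of_hasDerivAt_eq_sub_mul he (fun y hy => (le_abs_self _).trans (hh y hy))
    ((le_abs_self _).trans ha) x hx
  have hlower := le_of_hasDerivAt_eq_sub_mul (e := -e) (h := -h)
    (fun y hy => (he y hy).neg.congr_deriv (by simp only [Pi.neg_apply]; ring))
    (fun y hy => (neg_le_abs _).trans (hh y hy)) ((neg_le_abs _).trans ha) x hx
  exact abs_le.2 ⟨by simp only [Pi.neg_apply] at hlower; linarith, hupper⟩

lemma add_div_le_sqrt_add_div_sub {M d : ℝ} (h₁ : -M ≤ d) (h₂ : d < M) :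
    (M + d) / M ≤ √((M + d) / (M - d)) := by
  have hM : 0 < M := by linarith
  rw [Real.le_sqrt (div_nonneg (by linarith) hM.le) (div_nonneg (by linarith) (by linarith)),
    div_pow, div_le_div_iff₀ (by positivity) (by linarith)]
  nlinarith [mul_nonneg (show 0 ≤ M + d by linarith) (sq_nonneg d)]

theorem relaxation_contraction_step_general
    (β γ n N μ M T : ℝ) (hβ : 0 < β) (hγ : 0 < γ) (hn : 1 < n)
    (hμ : μ = β / γ) (hsmall : n * μ < 1) (hM : γ ≤ M)
    (g : ℝ → ℝ) (hg : ∀ r, g r = γ * n * Real.exp (-(μ * r)) + γ * r)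
    (R : ℝ → ℝ)
    (hRode : ∀ t ∈ Set.Icc (0 : ℝ) T,
      HasDerivAt R (γ * (N - n * Real.exp (-(μ * R t)) - R t)) t)
    (hRinit : R 0 = 0)
    (hRpos : ∀ t ∈ Set.Icc (0 : ℝ) T, 0 ≤ R t)
    (Rs : ℕ → ℝ → ℝ)
    (hRs0 : ∀ t, Rs 0 t = 0)
    (hinit : ∀ k, Rs k 0 = 0)
    (hode : ∀ k, ∀ t ∈ Set.Icc (0 : ℝ) T,
      HasDerivAt (Rs (k + 1)) (γ * N - g (Rs k t) + M * Rs k t - M * Rs (k + 1) t) t)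
    (hpos : ∀ k, ∀ t ∈ Set.Icc (0 : ℝ) T, 0 ≤ Rs k t) :
    ∀ k : ℕ, 1 ≤ k → ∀ t ∈ Set.Icc (0 : ℝ) T,
      |Rs k t - R t| ≤
        Real.sqrt ((M + γ * n * μ - γ) / (M - γ * n * μ + γ)) *
          sSup ((fun s => |Rs (k - 1) s - R s|) '' Set.Icc (0 : ℝ) T) := by
  intro k hk t ht
  obtain ⟨m, rfl⟩ : ∃ m, k = m + 1 := ⟨k - 1, by omega⟩
  rw [Nat.add_sub_cancel]
  set E := sSup ((fun s => |Rs m s - R s|) '' Icc 0 T)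
  set L := M + γ * n * μ - γ
  have hμ0 : 0 < μ := hμ ▸ div_pos hβ hγ
  have hM0 : 0 < M := hγ.trans_le hM
  have hγnμ : 0 < γ * n * μ := by positivity
  have hcont : ContinuousOn (fun s => |Rs m s - R s|) (Icc 0 T) := by
    refine (ContinuousOn.sub ?_ fun s hs => (hRode s hs).continuousAt.continuousWithinAt).abs
    cases m with
    | zero => exact continuousOn_const.congr fun s _ => hRs0 s
    | succ i => exact fun s hs => (hode i s hs).continuousAt.continuousWithinAt
  have hE : ∀ s ∈ Icc 0 T, |Rs m s - R s| ≤ E := fun s hs =>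
    le_csSup (isCompact_Icc.image_of_continuousOn hcont).bddAbove (mem_image_of_mem _ hs)
  have hE0 : 0 ≤ E := (abs_nonneg _).trans (hE t ht)
  have hL : 0 ≤ L := by linarith
  have herr : ∀ s ∈ Icc 0 T, HasDerivAt (fun s => Rs (m + 1) s - R s)
      ((M * (Rs m s - R s) - (g (Rs m s) - g (R s))) - M * (Rs (m + 1) s - R s)) s := by
    intro s hs
    exact ((hode m s hs).sub (hRode s hs)).congr_deriv (by rw [hg (R s)]; ring)
  have hforce : ∀ s ∈ Icc 0 T,
      |M * (Rs m s - R s) - (g (Rs m s) - g (R s))| ≤ M * (L * E / M) := by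
    intro s hs
    rw [mul_div_cancel₀ _ hM0.ne', hg, hg]
    exact (abs_mul_sub_sub_exp_le hγ.le (by linarith) hμ0.le hM (hpos m s hs) (hRpos s hs)).trans
      (mul_le_mul_of_nonneg_left (hE s hs) hL)
  have hstep := abs_le_of_hasDerivAt_eq_sub_mul herr hforce
    (by simp only [hinit, hRinit, sub_self, abs_zero]; exact div_nonneg (mul_nonneg hL hE0) hM0.le) t ht
  have hcoef := add_div_le_sqrt_add_div_sub (M := M) (d := γ * n * μ - γ) (by linarith)
    (by nlinarith [mul_lt_mul_of_pos_left hsmall hγ])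
  rw [← add_sub_assoc, ← sub_add] at hcoef
  calc |Rs (m + 1) t - R t| ≤ L * E / M := hstep
    _ = L / M * E := by ring
    _ ≤ _ := mul_le_mul_of_nonneg_right hcoef hE0

/-- Contraction estimate for the relaxation scheme when `nμ < 1`: for every `k ≥ 1`,
`max_{[0,T]} |R_k − R| ≤ √((M + γnμ − γ)/(M − γnμ + γ)) · max_{[0,T]} |R_{k−1} − R|`. -/
theorem relaxation_contraction_step
    (β γ n a N μ M T : ℝ) (hβ : 0 < β) (hγ : 0 < γ) (hn : 1 < n) (ha : 1 ≤ a)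
    (hN : N = n + a) (hμ : μ = β / γ) (hsmall : n * μ < 1) (hM : γ ≤ M) (hT : 0 < T)
    (g : ℝ → ℝ) (hg : ∀ r, g r = γ * n * Real.exp (-(μ * r)) + γ * r)
    (R : ℝ → ℝ)
    (hRode : ∀ t ∈ Set.Icc (0 : ℝ) T,
      HasDerivAt R (γ * (N - n * Real.exp (-(μ * R t)) - R t)) t)
    (hRinit : R 0 = 0)
    (hRpos : ∀ t ∈ Set.Icc (0 : ℝ) T, 0 ≤ R t)
    (Rs : ℕ → ℝ → ℝ)
    (hRs0 : ∀ t, Rs 0 t = 0)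
    (hinit : ∀ k, Rs k 0 = 0)
    (hode : ∀ k, ∀ t ∈ Set.Icc (0 : ℝ) T,
      HasDerivAt (Rs (k + 1)) (γ * N - g (Rs k t) + M * Rs k t - M * Rs (k + 1) t) t)
    (hpos : ∀ k, ∀ t ∈ Set.Icc (0 : ℝ) T, 0 ≤ Rs k t) :
    ∀ k : ℕ, 1 ≤ k → ∀ t ∈ Set.Icc (0 : ℝ) T,
      |Rs k t - R t| ≤
        Real.sqrt ((M + γ * n * μ - γ) / (M - γ * n * μ + γ)) *
          sSup ((fun s => |Rs (k - 1) s - R s|) '' Set.Icc (0 : ℝ) T) :=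
  relaxation_contraction_step_general β γ n N μ M T hβ hγ hn hμ hsmall hM g hg R hRode hRinit hRpos
    Rs hRs0 hinit hode hpos
end

section
/- Assume nμ ≤ 1 and M ≥ γ. Then the iterates of the relaxation scheme satisfy, for every k ≥ 1 and t ≥ 0, the pointwise bound |R_k(t)| ≤ γ·a·∑_{i=1}^{k} (M − γ)^{i−1}·t^{i}/i!, where a = N − n. -/
/-!
Because `g ≥ γ n`, each step gives `R_{k+1}' + M R_{k+1} ≤ γ a + M R_k`, while `ℓ(t) = γ a t`
satisfies `ℓ' + M ℓ = γ a + M ℓ`. Comparing through the integrating factor `e^{M t}` and inducting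
on `k` gives `R_k(t) ≤ γ a t`, which is at most the stated bound: the first term of the sum is `t`
and the others are nonnegative since `M ≥ γ`.
-/

open Set

theorem le_of_hasDerivAt_add_mul_le {u v u' v' : ℝ → ℝ} {M a b : ℝ}
    (hu : ∀ s ∈ Icc a b, HasDerivAt u (u' s) s) (hv : ∀ s ∈ Icc a b, HasDerivAt v (v' s) s)
    (hstart : u a ≤ v a) (hle : ∀ s ∈ Ico a b, u' s + M * u s ≤ v' s + M * v s) :
    ∀ ⦃x⦄, x ∈ Icc a b → u x ≤ v x := by
  have hexp : ∀ s, HasDerivAt (fun s => Real.exp (M * s)) (Real.exp (M * s) * M) s := fun s => by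
    simpa using ((hasDerivAt_id s).const_mul M).exp
  have weighted : ∀ {w w' : ℝ → ℝ}, (∀ s ∈ Icc a b, HasDerivAt w (w' s) s) →
      ∀ s ∈ Icc a b, HasDerivAt (fun s => Real.exp (M * s) * w s)
        (Real.exp (M * s) * (w' s + M * w s)) s := fun hw s hs =>
    ((hexp s).fun_mul (hw s hs)).congr_deriv (by ring)
  intro x hx
  have key := image_le_of_deriv_right_le_deriv_boundary
    (f := fun s => Real.exp (M * s) * u s) (B := fun s => Real.exp (M * s) * v s)
    (fun s hs => (weighted hu s hs).continuousAt.continuousWithinAt)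
    (fun s hs => (weighted hu s (Ico_subset_Icc_self hs)).hasDerivWithinAt)
    (mul_le_mul_of_nonneg_left hstart (Real.exp_pos _).le)
    (fun s hs => (weighted hv s hs).continuousAt.continuousWithinAt)
    (fun s hs => (weighted hv s (Ico_subset_Icc_self hs)).hasDerivWithinAt)
    (fun s hs => mul_le_mul_of_nonneg_left (hle s hs) (Real.exp_pos _).le) hx
  exact le_of_mul_le_mul_left key (Real.exp_pos _)

theorem relaxation_iterate_le_mul {R F : ℕ → ℝ → ℝ} {A M : ℝ} (hM : 0 ≤ M)
    (hR0 : ∀ t, 0 ≤ t → R 0 t ≤ A * t) (hinit : ∀ k, R (k + 1) 0 = 0)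
    (hode : ∀ k t, 0 ≤ t →
      HasDerivAt (R (k + 1)) (F k t + M * R k t - M * R (k + 1) t) t)
    (hF : ∀ k t, 0 ≤ t → F k t ≤ A) :
    ∀ k t, 0 ≤ t → R k t ≤ A * t := by
  intro k
  induction k with
  | zero => exact hR0
  | succ k ih =>
    intro t ht
    refine le_of_hasDerivAt_add_mul_le (M := M) (v := fun s => A * s) (v' := fun _ => A)
      (fun s hs => hode k s hs.1) (fun s _ => by simpa using (hasDerivAt_id s).const_mul A)
      (by simp [hinit]) (fun s hs => ?_) ⟨ht, le_rfl⟩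
    have := mul_le_mul_of_nonneg_left (ih s hs.1) hM
    linarith [hF k s hs.1]

theorem le_sum_Icc_pow_mul_pow_div_factorial {c t : ℝ} (hc : 0 ≤ c) (ht : 0 ≤ t) {k : ℕ}
    (hk : 1 ≤ k) :
    t ≤ ∑ i ∈ Finset.Icc 1 k, c ^ (i - 1) * t ^ i / (Nat.factorial i : ℝ) := by
  have := Finset.single_le_sum (f := fun i => c ^ (i - 1) * t ^ i / (Nat.factorial i : ℝ))
    (fun i _ => by positivity) (Finset.mem_Icc.mpr ⟨le_rfl, hk⟩)
  norm_num at this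
  exact this

theorem relaxation_pointwise_bound_general
    (γ n a N M : ℝ) (hγ : 0 < γ) (ha : 1 ≤ a)
    (hN : N = n + a) (hM : γ ≤ M)
    (g : ℝ → ℝ)
    (R : ℕ → ℝ → ℝ)
    (hR0 : ∀ t, R 0 t = 0)
    (hinit : ∀ k, R k 0 = 0)
    (hode : ∀ k t, 0 ≤ t →
      HasDerivAt (R (k + 1)) (γ * N - g (R k t) + M * R k t - M * R (k + 1) t) t)
    (hpos : ∀ k t, 0 ≤ t → 0 ≤ R k t)
    (hglow : ∀ k t, 0 ≤ t → γ * n ≤ g (R k t)) :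
    ∀ k : ℕ, 1 ≤ k → ∀ t : ℝ, 0 ≤ t →
      |R k t| ≤ γ * a *
        ∑ i ∈ Finset.Icc 1 k, (M - γ) ^ (i - 1) * t ^ i / (Nat.factorial i : ℝ) := by
  have hγa : 0 ≤ γ * a := by positivity
  have linear_bound : ∀ k t, 0 ≤ t → R k t ≤ γ * a * t :=
    relaxation_iterate_le_mul (F := fun k t => γ * N - g (R k t)) (hγ.le.trans hM)
      (fun t ht => by simpa [hR0] using mul_nonneg hγa ht) (fun k => hinit (k + 1)) hode
      (fun k t ht => by rw [hN]; linarith [hglow k t ht])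
  intro k hk t ht
  rw [abs_of_nonneg (hpos k t ht)]
  exact (linear_bound k t ht).trans <| mul_le_mul_of_nonneg_left
    (le_sum_Icc_pow_mul_pow_div_factorial (sub_nonneg.mpr hM) ht hk) hγa

/-- Pointwise bound for the relaxation iterates when `nμ ≤ 1` and `M ≥ γ`: for every
`k ≥ 1` and `t ≥ 0`, `|R_k(t)| ≤ γ·a·∑_{i=1}^{k} (M − γ)^{i−1}·t^{i}/i!` with `a = N − n`. -/
theorem relaxation_pointwise_bound
    (β γ n a N μ M : ℝ) (hβ : 0 < β) (hγ : 0 < γ) (hn : 1 < n) (ha : 1 ≤ a)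
    (hN : N = n + a) (hμ : μ = β / γ) (hsmall : n * μ ≤ 1) (hM : γ ≤ M)
    (g : ℝ → ℝ) (hg : ∀ r, g r = γ * n * Real.exp (-(μ * r)) + γ * r)
    (R : ℕ → ℝ → ℝ)
    (hR0 : ∀ t, R 0 t = 0)
    (hinit : ∀ k, R k 0 = 0)
    (hode : ∀ k t, 0 ≤ t →
      HasDerivAt (R (k + 1)) (γ * N - g (R k t) + M * R k t - M * R (k + 1) t) t)
    (hpos : ∀ k t, 0 ≤ t → 0 ≤ R k t)
    (hglow : ∀ k t, 0 ≤ t → γ * n ≤ g (R k t)) :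
    ∀ k : ℕ, 1 ≤ k → ∀ t : ℝ, 0 ≤ t →
      |R k t| ≤ γ * a *
        ∑ i ∈ Finset.Icc 1 k, (M - γ) ^ (i - 1) * t ^ i / (Nat.factorial i : ℝ) :=
  relaxation_pointwise_bound_general γ n a N M hγ ha hN hM g R hR0 hinit hode hpos hglow
end

section
/- Assume nμ ≤ 1 and γ ≤ M ≤ γ + 1/T. Then the relaxation scheme is uniformly bounded independently of k: for every k ≥ 0 and every t ∈ [0,T], |R_k(t)| ≤ T·γ·a·(e − 1), where a = N − n and e is Euler's number. -/
/-! Since `g (R_k) ≥ γ n` and `N - n = a`, the right-hand side of the `k`-th equation is at most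
`γ a + M R_k`. By induction, `R_k(t) ≤ γ a t`: the difference `u = R_{k+1} - γ a t` vanishes at
`0` and satisfies `u' + M u ≤ M (R_k - γ a t) ≤ 0`, so Grönwall's inequality keeps it nonpositive.
Hence `0 ≤ R_k(t) ≤ γ a T ≤ T γ a (e - 1)`, as `e ≥ 2`. -/

open Set

theorem nonpos_of_deriv_add_mul_nonpos {u u' : ℝ → ℝ} {M a b : ℝ}
    (hu : ContinuousOn u (Icc a b))
    (hu' : ∀ t ∈ Ico a b, HasDerivWithinAt u (u' t) (Ici t) t)
    (ha : u a ≤ 0) (hineq : ∀ t ∈ Ico a b, u' t + M * u t ≤ 0) :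
    ∀ t ∈ Icc a b, u t ≤ 0 := by
  intro t ht
  calc u t ≤ gronwallBound 0 (-M) 0 (t - a) :=
        le_gronwallBound_of_liminf_deriv_right_le hu
          (fun x hx _ hr => (hu' x hx).liminf_right_slope_le hr) ha
          (fun x hx => by linarith [hineq x hx]) t ht
    _ = 0 := gronwallBound_ε0_δ0 _ _

theorem relaxation_le_linear {γ n a N M T : ℝ} {g : ℝ → ℝ} {R : ℕ → ℝ → ℝ}
    (hγa : 0 ≤ γ * a) (hM : 0 ≤ M) (hN : N = n + a)
    (hR0 : ∀ t, R 0 t = 0) (hinit : ∀ k, R k 0 = 0)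
    (hode : ∀ k, ∀ t ∈ Icc (0 : ℝ) T,
      HasDerivAt (R (k + 1)) (γ * N - g (R k t) + M * R k t - M * R (k + 1) t) t)
    (hglow : ∀ k, ∀ t ∈ Icc (0 : ℝ) T, γ * n ≤ g (R k t)) :
    ∀ k, ∀ t ∈ Icc (0 : ℝ) T, R k t ≤ γ * a * t := by
  intro k
  induction k with
  | zero => exact fun t ht => (hR0 t).trans_le (mul_nonneg hγa ht.1)
  | succ k ih =>
    have hderiv : ∀ t ∈ Icc (0 : ℝ) T, HasDerivAt (fun s => R (k + 1) s - γ * a * s)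
        (γ * N - g (R k t) + M * R k t - M * R (k + 1) t - γ * a) t := fun t ht =>
      ((hode k t ht).sub ((hasDerivAt_id t).const_mul (γ * a))).congr_deriv (by simp)
    have hineq : ∀ t ∈ Ico (0 : ℝ) T,
        (γ * N - g (R k t) + M * R k t - M * R (k + 1) t - γ * a)
          + M * (R (k + 1) t - γ * a * t) ≤ 0 := by
      intro t ht
      have hg := hglow k t (Ico_subset_Icc_self ht)
      have hprev := mul_nonpos_of_nonneg_of_nonpos hM
        (sub_nonpos.2 (ih t (Ico_subset_Icc_self ht)))
      rw [hN]
      linarith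
    intro t ht
    have hu := nonpos_of_deriv_add_mul_nonpos
      (fun s hs => (hderiv s hs).continuousAt.continuousWithinAt)
      (fun s hs => (hderiv s (Ico_subset_Icc_self hs)).hasDerivWithinAt)
      (by simp [hinit]) hineq t ht
    linarith

theorem relaxation_uniform_bound_general
    (γ n a N M T : ℝ) (hγ : 0 < γ) (ha : 1 ≤ a)
    (hN : N = n + a)
    (hM : γ ≤ M)
    (g : ℝ → ℝ)
    (R : ℕ → ℝ → ℝ)
    (hR0 : ∀ t, R 0 t = 0)
    (hinit : ∀ k, R k 0 = 0)
    (hode : ∀ k, ∀ t ∈ Set.Icc (0 : ℝ) T,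
      HasDerivAt (R (k + 1)) (γ * N - g (R k t) + M * R k t - M * R (k + 1) t) t)
    (hpos : ∀ k, ∀ t ∈ Set.Icc (0 : ℝ) T, 0 ≤ R k t)
    (hglow : ∀ k, ∀ t ∈ Set.Icc (0 : ℝ) T, γ * n ≤ g (R k t)) :
    ∀ k : ℕ, ∀ t ∈ Set.Icc (0 : ℝ) T,
      |R k t| ≤ T * γ * a * (Real.exp 1 - 1) := by
  intro k t ht
  have hγa : 0 ≤ γ * a := mul_nonneg hγ.le (by linarith)
  have hT : 0 ≤ T := ht.1.trans ht.2
  have he : 1 ≤ Real.exp 1 - 1 := by linarith [Real.add_one_le_exp 1]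
  rw [abs_of_nonneg (hpos k t ht)]
  calc R k t ≤ γ * a * t :=
        relaxation_le_linear hγa (hγ.le.trans hM) hN hR0 hinit hode hglow k t ht
    _ ≤ γ * a * T := mul_le_mul_of_nonneg_left ht.2 hγa
    _ ≤ T * γ * a * (Real.exp 1 - 1) := by nlinarith [mul_nonneg hT hγa]

/-- Uniform boundedness of the relaxation scheme when `nμ ≤ 1` and `γ ≤ M ≤ γ + 1/T`:
for every `k` and every `t ∈ [0,T]`, `|R_k(t)| ≤ T·γ·a·(e − 1)` with `a = N − n`. -/
theorem relaxation_uniform_bound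
    (β γ n a N μ M T : ℝ) (hβ : 0 < β) (hγ : 0 < γ) (hn : 1 < n) (ha : 1 ≤ a)
    (hN : N = n + a) (hμ : μ = β / γ) (hsmall : n * μ ≤ 1) (hT : 0 < T)
    (hM : γ ≤ M) (hM' : M ≤ γ + 1 / T)
    (g : ℝ → ℝ) (hg : ∀ r, g r = γ * n * Real.exp (-(μ * r)) + γ * r)
    (R : ℕ → ℝ → ℝ)
    (hR0 : ∀ t, R 0 t = 0)
    (hinit : ∀ k, R k 0 = 0)
    (hode : ∀ k, ∀ t ∈ Set.Icc (0 : ℝ) T,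
      HasDerivAt (R (k + 1)) (γ * N - g (R k t) + M * R k t - M * R (k + 1) t) t)
    (hpos : ∀ k, ∀ t ∈ Set.Icc (0 : ℝ) T, 0 ≤ R k t)
    (hglow : ∀ k, ∀ t ∈ Set.Icc (0 : ℝ) T, γ * n ≤ g (R k t)) :
    ∀ k : ℕ, ∀ t ∈ Set.Icc (0 : ℝ) T,
      |R k t| ≤ T * γ * a * (Real.exp 1 - 1) :=
  relaxation_uniform_bound_general γ n a N M T hγ ha hN hM g R hR0 hinit hode hpos hglow
end

section
/- If (S, I, R, D) is a C¹ solution of the SIRD system on [0,∞) with S(0) = n, I(0) = a, R(0) = 0, D(0) = 0 (so that S(t) > 0 for all t ≥ 0), then the number of infectives is bounded by the amplitude: I(t) ≤ ((γ+σ)/β)·ln((γ+σ)/β) − (γ+σ)/β + a + n − ((γ+σ)/β)·ln(n) for all t ≥ 0. -/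
/-!
Along a solution, `dI/dS = -1 + ρ/S` with `ρ = (γ+σ)/β`, so `I + S - ρ ln S` is a first integral
and `I(t) = (ρ ln S(t) - S(t)) + a + n - ρ ln n`. The concave function `x ↦ ρ ln x - x` attains
its maximum `ρ ln ρ - ρ` at `x = ρ`.
-/

open Real

theorem Real.mul_log_sub_le_mul_log_sub {ρ x : ℝ} (hρ : 0 < ρ) (hx : 0 < x) :
    ρ * log x - x ≤ ρ * log ρ - ρ := by
  have h : log x - log ρ ≤ x / ρ - 1 :=
    log_div hx.ne' hρ.ne' ▸ log_le_sub_one_of_pos (div_pos hx hρ)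
  calc ρ * log x - x = ρ * (log x - log ρ) + ρ * log ρ - x := by ring
    _ ≤ ρ * (x / ρ - 1) + ρ * log ρ - x := by gcongr
    _ = ρ * log ρ - ρ := by field_simp; ring

theorem eq_apply_zero_of_hasDerivAt_zero_of_nonneg {f : ℝ → ℝ}
    (hf : ∀ t, 0 ≤ t → HasDerivAt f 0 t) {t : ℝ} (ht : 0 ≤ t) : f t = f 0 :=
  constant_of_has_deriv_right_zero
    (fun x hx => (hf x hx.1).continuousAt.continuousWithinAt)
    (fun x hx => (hf x hx.1).hasDerivWithinAt) t ⟨ht, le_rfl⟩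

noncomputable def sirdInvariant (ρ : ℝ) (S I : ℝ → ℝ) (t : ℝ) : ℝ :=
  I t + S t - ρ * log (S t)

theorem hasDerivAt_sirdInvariant {β κ t : ℝ} {S I : ℝ → ℝ} (hβ : β ≠ 0) (hSt : S t ≠ 0)
    (hS : HasDerivAt S (-(β * S t * I t)) t) (hI : HasDerivAt I (β * S t * I t - κ * I t) t) :
    HasDerivAt (sirdInvariant (κ / β) S I) 0 t := by
  have hlog := ((hasDerivAt_log hSt).comp t hS).const_mul (κ / β)
  exact ((hI.add hS).sub hlog).congr_deriv (by field_simp; ring)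

theorem sird_amplitude_bound_general
    (β γ σ n a : ℝ) (hβ : 0 < β) (hγ : 0 < γ) (hσ : 0 < σ)
    (S I : ℝ → ℝ)
    (hI : ∀ t, 0 ≤ t → HasDerivAt I (β * S t * I t - (γ + σ) * I t) t)
    (hS : ∀ t, 0 ≤ t → HasDerivAt S (-(β * S t * I t)) t)
    (hS0 : S 0 = n) (hI0 : I 0 = a)
    (hSpos : ∀ t, 0 ≤ t → 0 < S t) :
    ∀ t, 0 ≤ t →
      I t ≤ (γ + σ) / β * Real.log ((γ + σ) / β) - (γ + σ) / β + a + n -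
        (γ + σ) / β * Real.log n := by
  intro t ht
  have hρ : 0 < (γ + σ) / β := by positivity
  have hconst := eq_apply_zero_of_hasDerivAt_zero_of_nonneg
    (fun u hu => hasDerivAt_sirdInvariant hβ.ne' (hSpos u hu).ne' (hS u hu) (hI u hu)) ht
  have hmax := mul_log_sub_le_mul_log_sub hρ (hSpos t ht)
  simp only [sirdInvariant, hS0, hI0] at hconst
  linarith

/-- Amplitude bound for the SIRD model: any `C¹` solution (with `S > 0` on `[0,∞)`)
satisfies `I(t) ≤ ((γ+σ)/β)·ln((γ+σ)/β) − (γ+σ)/β + a + n − ((γ+σ)/β)·ln(n)`. -/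
theorem sird_amplitude_bound
    (β γ σ n a : ℝ) (hβ : 0 < β) (hγ : 0 < γ) (hσ : 0 < σ) (hn : 1 < n) (ha : 1 ≤ a)
    (S I R D : ℝ → ℝ)
    (hI : ∀ t, 0 ≤ t → HasDerivAt I (β * S t * I t - (γ + σ) * I t) t)
    (hS : ∀ t, 0 ≤ t → HasDerivAt S (-(β * S t * I t)) t)
    (hR : ∀ t, 0 ≤ t → HasDerivAt R (γ * I t) t)
    (hD : ∀ t, 0 ≤ t → HasDerivAt D (σ * I t) t)
    (hS0 : S 0 = n) (hI0 : I 0 = a) (hR0 : R 0 = 0) (hD0 : D 0 = 0)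
    (hSpos : ∀ t, 0 ≤ t → 0 < S t) :
    ∀ t, 0 ≤ t →
      I t ≤ (γ + σ) / β * Real.log ((γ + σ) / β) - (γ + σ) / β + a + n -
        (γ + σ) / β * Real.log n :=
  sird_amplitude_bound_general β γ σ n a hβ hγ hσ S I hI hS hS0 hI0 hSpos
end
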